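/- For distinct x, y in the open unit disk (as complex numbers), the identity 2π|x·∇ₓ⊥G_D(x,y)| = |x·y⊥|·(1−|x|²)(1−|y|²)/(|x−y|²|xȳ−1|²) holds, where G_D is the Green's function of the unit disk. -/

import Mathlib

open Real Complex
noncomputable section
/-- euclidean dot product on ℝ² ≅ ℂ -/
def dotC (v w : ℂ) : ℝ := (v * (starRingEnd ℂ) w).re
/-- rotation by π/2 on ℝ² ≅ ℂ -/
def perpC (v : ℂ) : ℂ := Complex.I * v
/-- inversion in the unit circle -/
def inv0 (y : ℂ) : ℂ := y / ((‖y‖ : ℂ)^2)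
/-- Green function of the unit disk: (1/2π) ln (|x−y| / (|x−y*||y|)) -/
def GD (x y : ℂ) : ℝ :=
  (1/(2*π)) * (Real.log (‖x - y‖) - Real.log (‖x - inv0 y‖ * ‖y‖))
/-- perpendicular gradient (in the first variable) of the disk Green function -/
def gradPerpGD (x y : ℂ) : ℂ := perpC (gradient (fun z => GD z y) x)



lemma conj_div_sq_abs (w : ℂ) :
    (starRingEnd ℂ) (w / ((‖w‖ : ℂ))^2) = w⁻¹ := by
  rcases eq_or_ne w 0 with h | h
  · simp [h]
  · rw [map_div₀, Complex.inv_def]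
    have : ((‖w‖ : ℂ))^2 = (Complex.normSq w : ℂ) := by
      rw [← Complex.sq_norm]; push_cast; ring
    rw [map_pow, Complex.conj_ofReal, this, div_eq_mul_inv, Complex.ofReal_inv]

lemma hasGradientAt_log_abs (a x : ℂ) (h : x ≠ a) :
    HasGradientAt (fun z => Real.log (‖z - a‖))
      ((x - a) / ((‖x - a‖ : ℂ))^2) x := by
  set w := x - a with hwdef
  have hw0 : w ≠ 0 := sub_ne_zero.mpr h
  have habsw : (‖w‖ : ℂ) ≠ 0 := by
    simpa using (norm_ne_zero_iff.mpr hw0)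
  set c : ℂ := (starRingEnd ℂ) w / (‖w‖ : ℂ) with hc
  have hc0 : c ≠ 0 := div_ne_zero (by simpa using hw0) habsw
  have hcw : c * w = (‖w‖ : ℂ) := by
    rw [hc, div_mul_eq_mul_div, mul_comm, Complex.mul_conj']
    rw [sq]
    push_cast
    rw [mul_div_assoc, div_self habsw, mul_one]
  have habsc : ‖c‖ = 1 := by
    rw [hc, norm_div, Complex.norm_conj, Complex.norm_real, Real.norm_eq_abs,
      _root_.abs_of_nonneg (norm_nonneg w), div_self (norm_ne_zero_iff.mpr hw0)]
  -- derivative of the holomorphic branch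
  have h1 : HasDerivAt (fun z : ℂ => c * (z - a)) c x := by
    simpa using ((hasDerivAt_id x).sub_const a).const_mul c
  have hmem : c * (x - a) ∈ Complex.slitPlane := by
    rw [← hwdef, hcw]
    exact Complex.mem_slitPlane_iff.mpr (Or.inl (by
      simpa using norm_pos_iff.mpr hw0))
  have h2 : HasDerivAt (fun z : ℂ => Complex.log (c * (z - a))) (w⁻¹) x := by
    have := (Complex.hasDerivAt_log hmem).comp x h1
    refine this.congr_deriv ?_
    rw [← hwdef, hcw]
    field_simp [hc]
    exact hcw
  -- the function equals the real part of the branch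
  have feq : (fun z => Real.log (‖z - a‖))
      = fun z => (Complex.log (c * (z - a))).re := by
    funext z
    rw [Complex.log_re, norm_mul, habsc, one_mul]
  rw [feq, hasGradientAt_iff_hasFDerivAt]
  have h3 : HasFDerivAt (fun z => (Complex.log (c * (z - a))).re)
      (Complex.reCLM.comp ((ContinuousLinearMap.smulRight (1 : ℂ →L[ℂ] ℂ) w⁻¹).restrictScalars ℝ))
      x := Complex.reCLM.hasFDerivAt.comp x (h2.hasFDerivAt.restrictScalars ℝ)
  refine h3.congr_fderiv ?_
  apply ContinuousLinearMap.ext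
  intro v
  rw [InnerProductSpace.toDual_apply_apply, Complex.inner, conj_div_sq_abs]
  simp [Complex.inv_re, Complex.inv_im]

lemma hasGradientAt_GD (y x : ℂ) (hxy : x ≠ y) (hxys : x ≠ inv0 y) (hy0 : y ≠ 0) :
    HasGradientAt (fun z => GD z y)
      ((1/(2*π)) • ((x - y) / ((‖x - y‖ : ℂ))^2
        - (x - inv0 y) / ((‖x - inv0 y‖ : ℂ))^2)) x := by
  have h1 := hasGradientAt_log_abs y x hxy
  have h2 := hasGradientAt_log_abs (inv0 y) x hxys
  rw [hasGradientAt_iff_hasFDerivAt] at h1 h2 ⊢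
  rw [map_smul, map_sub]
  have h3 : HasFDerivAt (fun z => (1/(2*π)) * (Real.log (‖z - y‖)
        - (Real.log (‖z - inv0 y‖) + Real.log (‖y‖))))
      ((1/(2*π)) • (InnerProductSpace.toDual ℝ ℂ ((x - y) / ((‖x - y‖ : ℂ))^2)
        - InnerProductSpace.toDual ℝ ℂ ((x - inv0 y) / ((‖x - inv0 y‖ : ℂ))^2))) x :=
    (h1.sub (h2.add_const _)).const_mul _
  refine h3.congr_of_eventuallyEq ?_
  filter_upwards [eventually_ne_nhds hxys] with z hz
  unfold GD
  rw [Real.log_mul (norm_ne_zero_iff.mpr (sub_ne_zero.mpr hz)) (norm_ne_zero_iff.mpr hy0)]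

lemma dotC_perpC (x v : ℂ) : dotC x (perpC v) = (x * (starRingEnd ℂ) v).im := by
  simp [dotC, perpC, Complex.mul_re, Complex.mul_im]
  ring


theorem stmt_12 (x y : ℂ) (hx : ‖x‖ < 1) (hy : ‖y‖ < 1) (hxy : x ≠ y) :
    2 * π * |dotC x (gradPerpGD x y)| =
      |dotC x (perpC y)| * ((1 - ‖x‖ ^ 2) * (1 - ‖y‖ ^ 2)) /
        (‖x - y‖ ^ 2 * ‖x * (starRingEnd ℂ) y - 1‖ ^ 2) := by
  rcases eq_or_ne y 0 with hy0 | hy0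
  · -- y = 0 : both sides vanish
    subst hy0
    have hx0 : x ≠ 0 := hxy
    have hfeq : (fun z => GD z 0) = fun z => (1/(2*π)) * Real.log (‖z - 0‖) := by
      funext z
      simp [GD, inv0]
    have hg : HasGradientAt (fun z => GD z 0)
        ((1/(2*π)) • ((x - 0) / ((‖x - 0‖ : ℂ))^2)) x := by
      rw [hfeq, hasGradientAt_iff_hasFDerivAt, map_smul]
      exact (hasGradientAt_iff_hasFDerivAt.mp (hasGradientAt_log_abs 0 x hx0)).const_mul _
    have hlhs : dotC x (gradPerpGD x 0) = 0 := by
      rw [gradPerpGD, hg.gradient, dotC_perpC]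
      rw [Complex.real_smul, map_mul, Complex.conj_ofReal, conj_div_sq_abs]
      rw [sub_zero, show x * (↑(1/(2*π)) * x⁻¹) = ↑(1/(2*π)) * (x * x⁻¹) by ring,
        mul_inv_cancel₀ hx0]
      simp
    have hrhs : dotC x (perpC 0) = 0 := by simp [dotC, perpC]
    rw [hlhs, hrhs]
    simp
  · -- main case
    have hy0' : ‖y‖ ≠ 0 := norm_ne_zero_iff.mpr hy0
    have hky : (starRingEnd ℂ) y ≠ 0 := by simpa using hy0
    have habs2 : ((‖y‖ : ℝ) : ℂ)^2 = y * (starRingEnd ℂ) y := by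
      rw [Complex.mul_conj']
    have hinv0 : inv0 y = ((starRingEnd ℂ) y)⁻¹ := by
      rw [inv0, habs2, div_eq_mul_inv, mul_inv, ← mul_assoc, mul_inv_cancel₀ hy0, one_mul]
    have hxys : x ≠ inv0 y := by
      intro h
      have h1 : ‖x‖ * ‖y‖ = 1 := by
        rw [h, hinv0, norm_inv, Complex.norm_conj, inv_mul_cancel₀ hy0']
      nlinarith [norm_nonneg x, norm_nonneg y]
    have hxy' : x - y ≠ 0 := sub_ne_zero.mpr hxy
    have hD2 : x * (starRingEnd ℂ) y - 1 ≠ 0 := by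
      refine sub_ne_zero.mpr fun h => ?_
      have := congrArg (fun z : ℂ => ‖z‖) h
      rw [norm_mul, Complex.norm_conj, norm_one] at this
      nlinarith [norm_nonneg x, norm_nonneg y]
    have hxk : x - ((starRingEnd ℂ) y)⁻¹ ≠ 0 := by
      rw [← hinv0]; exact sub_ne_zero.mpr hxys
    have hgr := (hasGradientAt_GD y x hxy hxys hy0).gradient
    -- the key complex identity
    have hE : x * ((x - y)⁻¹ - (x - inv0 y)⁻¹)
        = (x * (y * (starRingEnd ℂ) y - 1)) / ((x - y) * (x * (starRingEnd ℂ) y - 1)) := by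
      rw [hinv0]
      field_simp
      ring
    have him : 2 * π * dotC x (gradPerpGD x y)
        = ((x * (y * (starRingEnd ℂ) y - 1)) / ((x - y) * (x * (starRingEnd ℂ) y - 1))).im := by
      rw [gradPerpGD, hgr, dotC_perpC, Complex.real_smul, map_mul, Complex.conj_ofReal,
        map_sub, conj_div_sq_abs, conj_div_sq_abs,
        show x * (↑(1/(2*π)) * ((x - y)⁻¹ - (x - inv0 y)⁻¹))
          = ↑(1/(2*π)) * (x * ((x - y)⁻¹ - (x - inv0 y)⁻¹)) by ring, hE,
        Complex.mul_im, Complex.ofReal_re, Complex.ofReal_im, zero_mul, add_zero]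
      field_simp
    have key : 2 * π * dotC x (gradPerpGD x y)
        = -(dotC x (perpC y)) * ((1 - ‖x‖ ^ 2) * (1 - ‖y‖ ^ 2))
            / (‖x - y‖ ^ 2 * ‖x * (starRingEnd ℂ) y - 1‖ ^ 2) := by
      rw [him, Complex.div_im, div_sub_div_same, dotC_perpC,
        map_mul Complex.normSq, Complex.normSq_eq_norm_sq, Complex.normSq_eq_norm_sq, neg_mul]
      congr 1
      rw [Complex.sq_norm, Complex.sq_norm, Complex.normSq_apply, Complex.normSq_apply]
      simp only [Complex.mul_re, Complex.mul_im, Complex.sub_re, Complex.sub_im,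
        Complex.one_re, Complex.one_im, Complex.conj_re, Complex.conj_im]
      ring
    have h1 : 0 < 1 - ‖x‖ ^ 2 := by nlinarith [norm_nonneg x]
    have h2 : 0 < 1 - ‖y‖ ^ 2 := by nlinarith [norm_nonneg y]
    have hP : 0 ≤ (1 - ‖x‖ ^ 2) * (1 - ‖y‖ ^ 2) := le_of_lt (mul_pos h1 h2)
    have hQ : 0 < ‖x - y‖ ^ 2 * ‖x * (starRingEnd ℂ) y - 1‖ ^ 2 :=
      mul_pos (pow_pos (norm_pos_iff.mpr hxy') 2) (pow_pos (norm_pos_iff.mpr hD2) 2)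
    rw [show 2 * π * |dotC x (gradPerpGD x y)| = |2 * π * dotC x (gradPerpGD x y)| by
        rw [abs_mul, abs_of_pos (by positivity : (0:ℝ) < 2 * π)]]
    rw [key, abs_div, abs_mul, abs_neg, _root_.abs_of_nonneg hP, _root_.abs_of_pos hQ]
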